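/- arXiv:1607.05224 — 2 statements merged into one kernel-verified Lean document; each statement's English description precedes it below -/
import Mathlib

section
/- For every q ∈ (0, 1/2] and every ε ∈ [−1, 1] with (1+ε)q ∈ (0,1), the relative entropy satisfies D((1+ε)q ‖ q) ≥ (q/4)·ε². -/
noncomputable def relEntBer (x y : ℝ) : ℝ :=
  x * Real.log (x / y) + (1 - x) * Real.log ((1 - x) / (1 - y))

/-!
Writing `φ(u) = u log u + 1 - u` (Mathlib's `klFun`), the binary relative entropy splits as
`D(x‖y) = y φ(x/y) + (1 - y) φ((1 - x)/(1 - y))`, a sum of two nonnegative terms. Dropping the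
second one leaves `D((1+ε)q ‖ q) ≥ q φ(1 + ε)`, and `φ(u) ≥ (u - 1)²/4` on `[0, 2]` because
`φ(u) - (u - 1)²/4` vanishes at `u = 1` and its derivative `log u - (u - 1)/2` is `≤ 0` on `(0, 1)`
(as `log u ≤ u - 1`) and `≥ 0` on `(1, 2)` (as `log u ≥ 1 - 1/u ≥ (u - 1)/2`).
-/

open Real Set InformationTheory

lemma relEntBer_eq_klFun {x y : ℝ} (hy₀ : 0 < y) (hy₁ : y < 1) :
    relEntBer x y = y * klFun (x / y) + (1 - y) * klFun ((1 - x) / (1 - y)) := by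
  have hy₁' : 1 - y ≠ 0 := by linarith
  simp only [relEntBer, klFun_apply]
  field_simp
  ring

lemma mul_klFun_div_le_relEntBer {x y : ℝ} (hy₀ : 0 < y) (hy₁ : y < 1) (hx : x ≤ 1) :
    y * klFun (x / y) ≤ relEntBer x y := by
  rw [relEntBer_eq_klFun hy₀ hy₁, le_add_iff_nonneg_right]
  exact mul_nonneg (by linarith) (klFun_nonneg (div_nonneg (by linarith) (by linarith)))

lemma hasDerivAt_klFun_sub_sq_div_four {x : ℝ} (hx : x ≠ 0) :
    HasDerivAt (fun u => klFun u - (u - 1) ^ 2 / 4) (log x - (x - 1) / 2) x := by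
  have h_sq : HasDerivAt (fun u : ℝ => (u - 1) ^ 2 / 4) ((x - 1) / 2) x :=
    ((((hasDerivAt_id' x).sub_const 1).fun_pow 2).div_const 4).congr_deriv (by ring)
  exact (hasDerivAt_klFun hx).fun_sub h_sq

lemma continuous_klFun_sub_sq_div_four : Continuous fun u => klFun u - (u - 1) ^ 2 / 4 := by
  fun_prop

lemma antitoneOn_klFun_sub_sq_div_four :
    AntitoneOn (fun u => klFun u - (u - 1) ^ 2 / 4) (Icc 0 1) := by
  refine antitoneOn_of_hasDerivWithinAt_nonpos (convex_Icc 0 1)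
    continuous_klFun_sub_sq_div_four.continuousOn
    (fun x hx => (hasDerivAt_klFun_sub_sq_div_four ?_).hasDerivWithinAt) fun x hx => ?_
  all_goals rw [interior_Icc] at hx
  · exact hx.1.ne'
  · linarith [log_le_sub_one_of_pos hx.1, hx.2]

lemma monotoneOn_klFun_sub_sq_div_four :
    MonotoneOn (fun u => klFun u - (u - 1) ^ 2 / 4) (Icc 1 2) := by
  refine monotoneOn_of_hasDerivWithinAt_nonneg (convex_Icc 1 2)
    continuous_klFun_sub_sq_div_four.continuousOn
    (fun x hx => (hasDerivAt_klFun_sub_sq_div_four ?_).hasDerivWithinAt) fun x hx => ?_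
  all_goals rw [interior_Icc] at hx
  · linarith [hx.1]
  · have hx₀ : 0 < x := by linarith [hx.1]
    have h_inv : (x - 1) / 2 ≤ 1 - x⁻¹ := by
      rw [← sub_nonneg]
      have : 1 - x⁻¹ - (x - 1) / 2 = (x - 1) * (2 - x) / (2 * x) := by field_simp
      rw [this]
      exact div_nonneg (mul_nonneg (by linarith [hx.1]) (by linarith [hx.2])) (by positivity)
    linarith [one_sub_inv_le_log_of_pos hx₀]

lemma sq_sub_one_div_four_le_klFun {x : ℝ} (hx₀ : 0 ≤ x) (hx₂ : x ≤ 2) :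
    (x - 1) ^ 2 / 4 ≤ klFun x := by
  suffices 0 ≤ klFun x - (x - 1) ^ 2 / 4 by linarith
  have h_one : klFun 1 - (1 - 1) ^ 2 / 4 = 0 := by simp [klFun_one]
  rcases le_total x 1 with hx₁ | hx₁
  · exact h_one ▸ antitoneOn_klFun_sub_sq_div_four ⟨hx₀, hx₁⟩ ⟨zero_le_one, le_rfl⟩ hx₁
  · exact h_one ▸ monotoneOn_klFun_sub_sq_div_four ⟨le_rfl, one_le_two⟩ ⟨hx₁, hx₂⟩ hx₁

theorem relEntBer_quadratic_lower_bound (q ε : ℝ)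
    (hq : q ∈ Set.Ioc (0 : ℝ) (1 / 2)) (hε : ε ∈ Set.Icc (-1 : ℝ) 1)
    (hεq : (1 + ε) * q ∈ Set.Ioo (0 : ℝ) 1) :
    relEntBer ((1 + ε) * q) q ≥ (q / 4) * ε ^ 2 := by
  obtain ⟨hq₀, hq_half⟩ := hq
  obtain ⟨hε₁, hε₂⟩ := hε
  calc (q / 4) * ε ^ 2 = q * ((1 + ε - 1) ^ 2 / 4) := by ring
    _ ≤ q * klFun (1 + ε) :=
      mul_le_mul_of_nonneg_left (sq_sub_one_div_four_le_klFun (by linarith) (by linarith)) hq₀.le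
    _ = q * klFun ((1 + ε) * q / q) := by rw [mul_div_cancel_right₀ _ hq₀.ne']
    _ ≤ relEntBer ((1 + ε) * q) q := mul_klFun_div_le_relEntBer hq₀ (by linarith) hεq.2.le
end

section
/- Fix K > 0 and consider the linearization of the Fokker–Planck equation ∂_t q = (1/2)∂_θ² q − ∂_θ(q · (J ∗ q)) with J(θ) = −(K/2)sin θ around the uniform density 1/(2π) on the circle. In Fourier coordinates c_k(t) = ∫ q_t(θ)cos(kθ)dθ, s_k(t) = ∫ q_t(θ)sin(kθ)dθ, the linearized evolution decouples: each mode satisfies ẋ = λ_k x with λ_1 = (K−2)/4 and λ_k = −k²/2 for k ≥ 2. In particular the uniform density is linearly unstable if and only if K > 2. -/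
/-! The kernel `J = -(K/2) sin` has rank two: `J ∗ h` is a combination of `sin θ` and `cos θ`
whose coefficients are the first Fourier coordinates `c 1`, `s 1`, so the linearized equation is
the heat equation `∂ₜ h = ½ h''` forced by `K/(4π) (c 1 cos θ + s 1 sin θ)`. Differentiating a
Fourier coordinate under the integral and integrating by parts twice against `cos kθ`, `sin kθ`
turns `½ h''` into `-k²/2` times the coordinate, while by orthogonality the forcing reaches only
the mode `k = 1`, where it adds `π · K/(4π) = K/4`. -/

open Real intervalIntegral

open MeasureTheory (volume)

theorem integral_cos_intCast_mul (n : ℤ) :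
    ∫ x in (0 : ℝ)..2 * π, cos (n * x) = if n = 0 then 2 * π else 0 := by
  split_ifs with hn
  · simp [hn]
  · have hn' : (n : ℝ) ≠ 0 := Int.cast_ne_zero.mpr hn
    rw [integral_comp_mul_left (fun x => cos x) hn', integral_cos, mul_zero, sin_zero,
      sin_periodic.int_mul_eq, sin_zero, sub_self, smul_zero]

theorem integral_sin_intCast_mul (n : ℤ) : ∫ x in (0 : ℝ)..2 * π, sin (n * x) = 0 := by
  rcases eq_or_ne n 0 with rfl | hn
  · simp
  · have hn' : (n : ℝ) ≠ 0 := Int.cast_ne_zero.mpr hn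
    rw [integral_comp_mul_left (fun x => sin x) hn', integral_sin, mul_zero, cos_zero,
      cos_int_mul_two_pi, sub_self, smul_zero]

theorem intervalIntegrable_cos_intCast_mul (n : ℤ) (a b : ℝ) :
    IntervalIntegrable (fun x => cos (n * x)) volume a b :=
  (continuous_cos.comp (continuous_const_mul _)).intervalIntegrable a b

theorem intervalIntegrable_sin_intCast_mul (n : ℤ) (a b : ℝ) :
    IntervalIntegrable (fun x => sin (n * x)) volume a b :=
  (continuous_sin.comp (continuous_const_mul _)).intervalIntegrable a b

theorem integral_cos_natCast_mul_mul_cos {m : ℕ} (hm : m ≠ 0) (n : ℕ) :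
    ∫ x in (0 : ℝ)..2 * π, cos (m * x) * cos (n * x) = if m = n then π else 0 := by
  have hprod : ∀ x : ℝ, cos (m * x) * cos (n * x)
      = (cos (((m - n : ℤ) : ℝ) * x) + cos (((m + n : ℤ) : ℝ) * x)) / 2 := by
    intro x; push_cast; rw [sub_mul, add_mul, cos_sub, cos_add]; ring
  simp_rw [hprod]
  rw [integral_div, integral_add (intervalIntegrable_cos_intCast_mul _ _ _)
    (intervalIntegrable_cos_intCast_mul _ _ _), integral_cos_intCast_mul,
    integral_cos_intCast_mul, if_neg (show (m + n : ℤ) ≠ 0 by omega)]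
  by_cases hmn : m = n
  · simp only [hmn, sub_self, if_true]
    ring
  · rw [if_neg (by omega), if_neg hmn]
    ring

theorem integral_sin_natCast_mul_mul_sin {m : ℕ} (hm : m ≠ 0) (n : ℕ) :
    ∫ x in (0 : ℝ)..2 * π, sin (m * x) * sin (n * x) = if m = n then π else 0 := by
  have hprod : ∀ x : ℝ, sin (m * x) * sin (n * x)
      = (cos (((m - n : ℤ) : ℝ) * x) - cos (((m + n : ℤ) : ℝ) * x)) / 2 := by
    intro x; push_cast; rw [sub_mul, add_mul, cos_sub, cos_add]; ring
  simp_rw [hprod]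
  rw [integral_div, integral_sub (intervalIntegrable_cos_intCast_mul _ _ _)
    (intervalIntegrable_cos_intCast_mul _ _ _), integral_cos_intCast_mul,
    integral_cos_intCast_mul, if_neg (show (m + n : ℤ) ≠ 0 by omega)]
  by_cases hmn : m = n
  · simp only [hmn, sub_self, if_true]
    ring
  · rw [if_neg (by omega), if_neg hmn]
    ring

theorem integral_sin_intCast_mul_mul_cos (m n : ℤ) :
    ∫ x in (0 : ℝ)..2 * π, sin (m * x) * cos (n * x) = 0 := by
  have hprod : ∀ x : ℝ, sin (m * x) * cos (n * x)
      = (sin (((m + n : ℤ) : ℝ) * x) + sin (((m - n : ℤ) : ℝ) * x)) / 2 := by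
    intro x; push_cast; rw [sub_mul, add_mul, sin_sub, sin_add]; ring
  simp_rw [hprod]
  rw [integral_div, integral_add (intervalIntegrable_sin_intCast_mul _ _ _)
    (intervalIntegrable_sin_intCast_mul _ _ _), integral_sin_intCast_mul,
    integral_sin_intCast_mul, add_zero, zero_div]

theorem Function.Periodic.iteratedDeriv {f : ℝ → ℝ} {c : ℝ} (hf : f.Periodic c) (n : ℕ) :
    (iteratedDeriv n f).Periodic c := fun x => by
  have hshift : (fun z => f (z + c)) = f := funext hf
  rw [← congrFun (iteratedDeriv_comp_add_const n f c) x, hshift]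

theorem integral_mul_deriv_deriv_eq_deriv_deriv_mul {u u' u'' v v' v'' : ℝ → ℝ} {a b : ℝ}
    (hu : ∀ x, HasDerivAt u (u' x) x) (hu' : ∀ x, HasDerivAt u' (u'' x) x)
    (hv : ∀ x, HasDerivAt v (v' x) x) (hv' : ∀ x, HasDerivAt v' (v'' x) x)
    (hu'' : IntervalIntegrable u'' volume a b) (hv'' : IntervalIntegrable v'' volume a b)
    (hbdry : u b * v' b - u' b * v b = u a * v' a - u' a * v a) :
    ∫ x in a..b, u x * v'' x = ∫ x in a..b, u'' x * v x := by
  have hcont : ∀ {w w' : ℝ → ℝ}, (∀ x, HasDerivAt w (w' x) x) → Continuous w :=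
    fun hw => continuous_iff_continuousAt.mpr fun x => (hw x).continuousAt
  have h₁ := integral_mul_deriv_eq_deriv_mul (fun x _ => hu x) (fun x _ => hv' x)
    ((hcont hu').intervalIntegrable a b) hv''
  have h₂ := integral_mul_deriv_eq_deriv_mul (fun x _ => hv x) (fun x _ => hu' x)
    ((hcont hv').intervalIntegrable a b) hu''
  simp only [mul_comm (u'' _), mul_comm (v' _) (u' _)] at h₂ ⊢
  linarith

theorem integral_iteratedDeriv_two_mul_eq_neg_sq_mul {f v v' : ℝ → ℝ} {T ω : ℝ}
    (hf : ContDiff ℝ 2 f) (hfT : f.Periodic T)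
    (hv : ∀ x, HasDerivAt v (v' x) x) (hv' : ∀ x, HasDerivAt v' (-ω ^ 2 * v x) x)
    (hvT : v.Periodic T) (hv'T : v'.Periodic T) :
    ∫ x in (0 : ℝ)..T, iteratedDeriv 2 f x * v x = -ω ^ 2 * ∫ x in (0 : ℝ)..T, f x * v x := by
  have hf₁ : ∀ x, HasDerivAt f (iteratedDeriv 1 f x) x := fun x => by
    simpa [iteratedDeriv_one] using (hf.differentiable (by norm_num) x).hasDerivAt
  have hf₂ : ∀ x, HasDerivAt (iteratedDeriv 1 f) (iteratedDeriv 2 f x) x := fun x => by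
    rw [show iteratedDeriv 2 f = deriv (iteratedDeriv 1 f) from iteratedDeriv_succ]
    exact (hf.differentiable_iteratedDeriv 1 (by norm_num) x).hasDerivAt
  have hv_cont : Continuous v := continuous_iff_continuousAt.mpr fun x => (hv x).continuousAt
  rw [← integral_const_mul, ← integral_mul_deriv_deriv_eq_deriv_deriv_mul hf₁ hf₂ hv hv'
    ((hf.continuous_iteratedDeriv 2 le_rfl).intervalIntegrable _ _)
    ((continuous_const.mul hv_cont).intervalIntegrable _ _)]
  · simp only [mul_left_comm]
  · simp only [← hfT 0, ← hvT 0, ← hv'T 0, ← hfT.iteratedDeriv 1 0, zero_add]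

theorem integral_iteratedDeriv_two_mul_cos {f : ℝ → ℝ} (hf : ContDiff ℝ 2 f)
    (hper : f.Periodic (2 * π)) (k : ℕ) :
    ∫ x in (0 : ℝ)..2 * π, iteratedDeriv 2 f x * cos (k * x)
      = -(k : ℝ) ^ 2 * ∫ x in (0 : ℝ)..2 * π, f x * cos (k * x) :=
  integral_iteratedDeriv_two_mul_eq_neg_sq_mul hf hper
    (fun x => ((hasDerivAt_id' x).const_mul (k : ℝ)).cos.congr_deriv (by ring))
    (fun x => (((hasDerivAt_id' x).const_mul (k : ℝ)).sin.const_mul (-k : ℝ)).congr_deriv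
      (by ring))
    (fun x => by simp only [mul_add, cos_add_nat_mul_two_pi])
    (fun x => by simp only [mul_add, sin_add_nat_mul_two_pi])

theorem integral_iteratedDeriv_two_mul_sin {f : ℝ → ℝ} (hf : ContDiff ℝ 2 f)
    (hper : f.Periodic (2 * π)) (k : ℕ) :
    ∫ x in (0 : ℝ)..2 * π, iteratedDeriv 2 f x * sin (k * x)
      = -(k : ℝ) ^ 2 * ∫ x in (0 : ℝ)..2 * π, f x * sin (k * x) :=
  integral_iteratedDeriv_two_mul_eq_neg_sq_mul hf hper
    (fun x => ((hasDerivAt_id' x).const_mul (k : ℝ)).sin.congr_deriv (by ring))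
    (fun x => (((hasDerivAt_id' x).const_mul (k : ℝ)).cos.const_mul (k : ℝ)).congr_deriv
      (by ring))
    (fun x => by simp only [mul_add, sin_add_nat_mul_two_pi])
    (fun x => by simp only [mul_add, cos_add_nat_mul_two_pi])

theorem hasDerivAt_integral_of_continuous_deriv {F F' : ℝ → ℝ → ℝ} {a b : ℝ}
    (hF : ∀ t, Continuous (F t)) (hF' : Continuous (Function.uncurry F'))
    (hderiv : ∀ t θ, HasDerivAt (F · θ) (F' t θ) t) (t₀ : ℝ) :
    HasDerivAt (fun t => ∫ θ in a..b, F t θ) (∫ θ in a..b, F' t₀ θ) t₀ := by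
  have hcompact : IsCompact (Metric.closedBall t₀ 1 ×ˢ Set.uIcc a b) :=
    (isCompact_closedBall t₀ 1).prod isCompact_uIcc
  obtain ⟨M, hM⟩ := hcompact.exists_bound_of_continuousOn hF'.continuousOn
  refine (hasDerivAt_integral_of_dominated_loc_of_deriv_le (bound := fun _ => M)
    (Metric.ball_mem_nhds t₀ one_pos)
    (Filter.Eventually.of_forall fun t => (hF t).aestronglyMeasurable)
    ((hF t₀).intervalIntegrable _ _)
    (hF'.comp (Continuous.prodMk_right t₀)).aestronglyMeasurable
    ?_ intervalIntegrable_const (MeasureTheory.ae_of_all _ fun θ _ t _ => hderiv t θ)).2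
  exact MeasureTheory.ae_of_all _ fun θ hθ t ht =>
    hM (t, θ) ⟨Metric.ball_subset_closedBall ht, Set.uIoc_subset_uIcc hθ⟩

theorem hasDerivAt_integral_sin_sub_mul {u : ℝ → ℝ} {a b : ℝ}
    (hu : IntervalIntegrable u volume a b) (x : ℝ) :
    HasDerivAt (fun x => ∫ y in a..b, sin (x - y) * u y)
      (cos x * (∫ y in a..b, u y * cos y) + sin x * ∫ y in a..b, u y * sin y) x := by
  have hexpand : (fun x => ∫ y in a..b, sin (x - y) * u y)
      = fun x => sin x * (∫ y in a..b, u y * cos y) - cos x * ∫ y in a..b, u y * sin y := by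
    funext x
    rw [← integral_const_mul, ← integral_const_mul,
      ← integral_sub ((hu.mul_continuousOn continuous_cos.continuousOn).const_mul _)
        ((hu.mul_continuousOn continuous_sin.continuousOn).const_mul _)]
    simp only [sin_sub]
    congr 1; funext y; ring
  rw [hexpand]
  exact (((hasDerivAt_sin x).mul_const _).sub ((hasDerivAt_cos x).mul_const _)).congr_deriv
    (by ring)

theorem integral_half_iteratedDeriv_two_add_first_harmonic_mul_cos {f : ℝ → ℝ}
    (hf : ContDiff ℝ 2 f) (hper : f.Periodic (2 * π)) (A B : ℝ) (k : ℕ) :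
    ∫ x in (0 : ℝ)..2 * π, (1 / 2 * iteratedDeriv 2 f x + A * cos x + B * sin x) * cos (k * x)
      = -(k : ℝ) ^ 2 / 2 * (∫ x in (0 : ℝ)..2 * π, f x * cos (k * x))
        + if k = 1 then π * A else 0 := by
  have hcc := integral_cos_natCast_mul_mul_cos one_ne_zero k
  have hsc := integral_sin_intCast_mul_mul_cos 1 k
  simp only [Nat.cast_one, Int.cast_one, Int.cast_natCast, one_mul, @eq_comm ℕ 1] at hcc hsc
  have hf₂ := hf.continuous_iteratedDeriv 2 le_rfl
  simp only [add_mul, mul_assoc]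
  have hint : ∀ {g : ℝ → ℝ}, Continuous g → IntervalIntegrable g volume 0 (2 * π) :=
    fun hg => hg.intervalIntegrable _ _
  rw [integral_add (hint (by fun_prop)) (hint (by fun_prop)),
    integral_add (hint (by fun_prop)) (hint (by fun_prop)), integral_const_mul,
    integral_const_mul, integral_const_mul, integral_iteratedDeriv_two_mul_cos hf hper, hcc, hsc]
  split_ifs <;> ring

theorem integral_half_iteratedDeriv_two_add_first_harmonic_mul_sin {f : ℝ → ℝ}
    (hf : ContDiff ℝ 2 f) (hper : f.Periodic (2 * π)) (A B : ℝ) (k : ℕ) :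
    ∫ x in (0 : ℝ)..2 * π, (1 / 2 * iteratedDeriv 2 f x + A * cos x + B * sin x) * sin (k * x)
      = -(k : ℝ) ^ 2 / 2 * (∫ x in (0 : ℝ)..2 * π, f x * sin (k * x))
        + if k = 1 then π * B else 0 := by
  have hss := integral_sin_natCast_mul_mul_sin one_ne_zero k
  have hcs : ∫ x in (0 : ℝ)..2 * π, cos x * sin (k * x) = 0 := by
    simpa [mul_comm] using integral_sin_intCast_mul_mul_cos k 1
  simp only [Nat.cast_one, one_mul, @eq_comm ℕ 1] at hss
  have hf₂ := hf.continuous_iteratedDeriv 2 le_rfl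
  simp only [add_mul, mul_assoc]
  have hint : ∀ {g : ℝ → ℝ}, Continuous g → IntervalIntegrable g volume 0 (2 * π) :=
    fun hg => hg.intervalIntegrable _ _
  rw [integral_add (hint (by fun_prop)) (hint (by fun_prop)),
    integral_add (hint (by fun_prop)) (hint (by fun_prop)), integral_const_mul,
    integral_const_mul, integral_const_mul, integral_iteratedDeriv_two_mul_sin hf hper, hcs, hss]
  split_ifs <;> ring

theorem hasDerivAt_fourier_coeffs_of_forced_heat {h : ℝ → ℝ → ℝ} {A B : ℝ → ℝ}
    (hsmooth : ∀ t, ContDiff ℝ 2 (h t))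
    (hDcont : Continuous fun p : ℝ × ℝ => deriv (fun t => h t p.2) p.1)
    (hper : ∀ t, (h t).Periodic (2 * π))
    (hPDE : ∀ t θ, HasDerivAt (fun t' => h t' θ)
      (1 / 2 * iteratedDeriv 2 (h t) θ + A t * cos θ + B t * sin θ) t)
    (k : ℕ) (t : ℝ) :
    HasDerivAt (fun t => ∫ θ in (0 : ℝ)..2 * π, h t θ * cos (k * θ))
      (-(k : ℝ) ^ 2 / 2 * (∫ θ in (0 : ℝ)..2 * π, h t θ * cos (k * θ))
        + if k = 1 then π * A t else 0) t ∧
    HasDerivAt (fun t => ∫ θ in (0 : ℝ)..2 * π, h t θ * sin (k * θ))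
      (-(k : ℝ) ^ 2 / 2 * (∫ θ in (0 : ℝ)..2 * π, h t θ * sin (k * θ))
        + if k = 1 then π * B t else 0) t := by
  have hLeibniz : ∀ g : ℝ → ℝ, Continuous g →
      HasDerivAt (fun t => ∫ θ in (0 : ℝ)..2 * π, h t θ * g θ) (∫ θ in (0 : ℝ)..2 * π,
        (1 / 2 * iteratedDeriv 2 (h t) θ + A t * cos θ + B t * sin θ) * g θ) t := by
    intro g hg
    simp_rw [← (hPDE _ _).deriv]
    exact hasDerivAt_integral_of_continuous_deriv (F := fun t θ => h t θ * g θ)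
      (F' := fun t θ => deriv (h · θ) t * g θ) (fun t => (hsmooth t).continuous.mul hg)
      (hDcont.mul (hg.comp continuous_snd))
      (fun t θ => (hPDE t θ).differentiableAt.hasDerivAt.mul_const _) t
  constructor
  · rw [← integral_half_iteratedDeriv_two_add_first_harmonic_mul_cos (hsmooth t) (hper t)]
    exact hLeibniz _ (by fun_prop)
  · rw [← integral_half_iteratedDeriv_two_add_first_harmonic_mul_sin (hsmooth t) (hper t)]
    exact hLeibniz _ (by fun_prop)

theorem kuramoto_linearization_fourier_modes_general
    (K : ℝ)
    (J : ℝ → ℝ) (hJ : ∀ θ, J θ = -(K / 2) * Real.sin θ)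
    (h : ℝ → ℝ → ℝ)
    -- regularity of the perturbation
    (hsmooth : ∀ t, ContDiff ℝ 2 (h t))
    (hDcont : Continuous fun p : ℝ × ℝ => deriv (fun t => h t p.2) p.1)
    -- 2π-periodicity and zero mean (mass conservation)
    (hper : ∀ t θ, h t (θ + 2 * π) = h t θ)
    -- the linearized Fokker–Planck equation ∂ₜ h = (1/2) h'' − (1/(2π)) (J ∗ h)'
    (hPDE : ∀ t θ, HasDerivAt (fun t' => h t' θ)
      ((1 / 2) * iteratedDeriv 2 (h t) θ
        - (1 / (2 * π)) * deriv (fun x => ∫ y in (0 : ℝ)..(2 * π), J (x - y) * h t y) θ) t)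
    -- Fourier coordinates
    (c s : ℕ → ℝ → ℝ)
    (hc : ∀ k t, c k t = ∫ θ in (0 : ℝ)..(2 * π), h t θ * Real.cos (k * θ))
    (hs : ∀ k t, s k t = ∫ θ in (0 : ℝ)..(2 * π), h t θ * Real.sin (k * θ)) :
    (∀ t, HasDerivAt (c 1) (((K - 2) / 4) * c 1 t) t
        ∧ HasDerivAt (s 1) (((K - 2) / 4) * s 1 t) t) ∧
    (∀ k : ℕ, 2 ≤ k → ∀ t, HasDerivAt (c k) ((-(k : ℝ) ^ 2 / 2) * c k t) t
        ∧ HasDerivAt (s k) ((-(k : ℝ) ^ 2 / 2) * s k t) t) ∧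
    (0 < (K - 2) / 4 ↔ 2 < K) := by
  have hforced : ∀ t θ, HasDerivAt (fun t' => h t' θ) (1 / 2 * iteratedDeriv 2 (h t) θ
      + K / (4 * π) * c 1 t * cos θ + K / (4 * π) * s 1 t * sin θ) t := by
    intro t θ
    have hconv : (fun x => ∫ y in (0 : ℝ)..2 * π, J (x - y) * h t y)
        = fun x => -(K / 2) * ∫ y in (0 : ℝ)..2 * π, sin (x - y) * h t y := by
      funext x
      simp only [hJ, mul_assoc, integral_const_mul]
    convert hPDE t θ using 1
    rw [hconv, ((hasDerivAt_integral_sin_sub_mul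
      ((hsmooth t).continuous.intervalIntegrable _ _) θ).const_mul _).deriv, hc, hs]
    simp only [Nat.cast_one, one_mul]
    field_simp
    ring
  have hmodes : ∀ k t, HasDerivAt (c k)
        (-(k : ℝ) ^ 2 / 2 * c k t + if k = 1 then π * (K / (4 * π) * c 1 t) else 0) t ∧
      HasDerivAt (s k)
        (-(k : ℝ) ^ 2 / 2 * s k t + if k = 1 then π * (K / (4 * π) * s 1 t) else 0) t := by
    simpa only [← hc, ← hs] using
      hasDerivAt_fourier_coeffs_of_forced_heat hsmooth hDcont hper hforced
  refine ⟨fun t => ⟨?_, ?_⟩, fun k hk t => ⟨?_, ?_⟩, by constructor <;> intro <;> linarith⟩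
  · exact (hmodes 1 t).1.congr_deriv (by rw [if_pos rfl]; field_simp; ring)
  · exact (hmodes 1 t).2.congr_deriv (by rw [if_pos rfl]; field_simp; ring)
  · exact (hmodes k t).1.congr_deriv (by rw [if_neg (by omega)]; ring)
  · exact (hmodes k t).2.congr_deriv (by rw [if_neg (by omega)]; ring)

/-- Linearization of the Kuramoto Fokker–Planck equation around the uniform
density on the circle: in Fourier coordinates the modes decouple, the first
mode grows at rate `(K-2)/4`, every mode `k ≥ 2` decays at rate `k²/2`, and the
uniform density is linearly unstable iff `K > 2`. -/
theorem kuramoto_linearization_fourier_modes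
    (K : ℝ) (hK : 0 < K)
    (J : ℝ → ℝ) (hJ : ∀ θ, J θ = -(K / 2) * Real.sin θ)
    (h : ℝ → ℝ → ℝ)
    -- regularity of the perturbation
    (hsmooth : ∀ t, ContDiff ℝ 2 (h t))
    (hcont : Continuous fun p : ℝ × ℝ => h p.1 p.2)
    (hDcont : Continuous fun p : ℝ × ℝ => deriv (fun t => h t p.2) p.1)
    -- 2π-periodicity and zero mean (mass conservation)
    (hper : ∀ t θ, h t (θ + 2 * π) = h t θ)
    (hmean : ∀ t, (∫ θ in (0 : ℝ)..(2 * π), h t θ) = 0)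
    -- the linearized Fokker–Planck equation ∂ₜ h = (1/2) h'' − (1/(2π)) (J ∗ h)'
    (hPDE : ∀ t θ, HasDerivAt (fun t' => h t' θ)
      ((1 / 2) * iteratedDeriv 2 (h t) θ
        - (1 / (2 * π)) * deriv (fun x => ∫ y in (0 : ℝ)..(2 * π), J (x - y) * h t y) θ) t)
    -- Fourier coordinates
    (c s : ℕ → ℝ → ℝ)
    (hc : ∀ k t, c k t = ∫ θ in (0 : ℝ)..(2 * π), h t θ * Real.cos (k * θ))
    (hs : ∀ k t, s k t = ∫ θ in (0 : ℝ)..(2 * π), h t θ * Real.sin (k * θ)) :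
    (∀ t, HasDerivAt (c 1) (((K - 2) / 4) * c 1 t) t
        ∧ HasDerivAt (s 1) (((K - 2) / 4) * s 1 t) t) ∧
    (∀ k : ℕ, 2 ≤ k → ∀ t, HasDerivAt (c k) ((-(k : ℝ) ^ 2 / 2) * c k t) t
        ∧ HasDerivAt (s k) ((-(k : ℝ) ^ 2 / 2) * s k t) t) ∧
    (0 < (K - 2) / 4 ↔ 2 < K) :=
  kuramoto_linearization_fourier_modes_general K J hJ h hsmooth hDcont hper hPDE c s hc hs
end
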